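/- Let p be a prime, R = 𝔽_p[x₁,…,xₙ], f ∈ R, and a, e ∈ ℕ. Then the test ideal τ(f^{a/p^e}) is the smallest ideal J of R such that f^a ∈ J^{[p^e]}; that is, f^a ∈ (τ(f^{a/p^e}))^{[p^e]}, and for every ideal J ⊆ R with f^a ∈ J^{[p^e]} one has τ(f^{a/p^e}) ⊆ J. -/

import Mathlib

/-- The Frobenius power `J^{[q]}`: the ideal generated by `q`-th powers of elements of `J`. -/
def frobeniusPower {R : Type*} [CommRing R] (J : Ideal R) (q : ℕ) : Ideal R :=
  Ideal.span ((fun g => g ^ q) '' (J : Set R))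

/-- An additive map `ψ : R → R` is `e`-Frobenius-linear if `ψ(r^{pᵉ}·s) = r·ψ(s)`
for all `r, s`. -/
def IsFrobeniusLinear (p n e : ℕ)
    (ψ : MvPolynomial (Fin n) (ZMod p) → MvPolynomial (Fin n) (ZMod p)) : Prop :=
  (∀ x y, ψ (x + y) = ψ x + ψ y) ∧ ∀ r s, ψ (r ^ p ^ e * s) = r * ψ s

/-- The test ideal `τ(f^{a/pᵉ})`: the ideal generated by the images `ψ(f^a)` over all
`e`-Frobenius-linear maps `ψ`. -/
noncomputable def testIdeal (p n : ℕ) (f : MvPolynomial (Fin n) (ZMod p)) (a e : ℕ) :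
    Ideal (MvPolynomial (Fin n) (ZMod p)) :=
  Ideal.span {y | ∃ ψ, IsFrobeniusLinear p n e ψ ∧ ψ (f ^ a) = y}

/-! Over `𝔽_p` one has `r ^ q = expand q r` for `q = p ^ e`, and `R` is free over its subring
of `q`-th powers with basis the monomials `x^ν`, `ν < q`: every `h` equals
`∑ ν, (ψ_ν h) ^ q * x^ν`, where `ψ_ν` (`frobeniusCoeff q ν`) keeps the terms of `h` with
exponent `≡ ν mod q` and divides their exponents by `q`. Each `ψ_ν` is `e`-Frobenius-linear, so
for `h = f ^ a` this puts `f ^ a` in `τ^{[q]}`. Conversely an `e`-Frobenius-linear `ψ` sends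
`∑ cᵢ gᵢ ^ q` to `∑ gᵢ ψ(cᵢ)`, so it maps `J^{[q]}` into `J`. -/

namespace Finsupp

variable {σ : Type*}

lemma smul_add_injective (q : ℕ) [NeZero q] (ν : σ →₀ ℕ) :
    Function.Injective fun m : σ →₀ ℕ => q • m + ν :=
  (add_left_injective ν).comp (smul_right_injective _ (NeZero.ne q))

variable {q : ℕ}

lemma exists_smul_add_eq [NeZero q] (d : σ →₀ ℕ) :
    ∃ m ν : σ →₀ ℕ, (∀ i, ν i < q) ∧ q • m + ν = d :=
  ⟨d.mapRange (· / q) (Nat.zero_div q), d.mapRange (· % q) (Nat.zero_mod q),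
    fun i => Nat.mod_lt _ (NeZero.pos q), by ext i; simp [Nat.div_add_mod]⟩

lemma smul_add_eq_smul_add_iff {m m' ν ν' : σ →₀ ℕ} (hν : ∀ i, ν i < q) (hν' : ∀ i, ν' i < q) :
    q • m + ν = q • m' + ν' ↔ m = m' ∧ ν = ν' := by
  refine ⟨fun h => ?_, by rintro ⟨rfl, rfl⟩; rfl⟩
  simp only [Finsupp.ext_iff, ← forall_and]
  intro i
  have hi : ν i + q * m i = q * m' i + ν' i := by
    simpa [add_comm] using DFunLike.congr_fun h i
  have hq : 0 < q := (Nat.zero_le _).trans_lt (hν i)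
  obtain ⟨hdiv, hmod⟩ := (Nat.div_mod_unique hq).2 ⟨hi, hν i⟩
  obtain ⟨hdiv', hmod'⟩ := (Nat.div_mod_unique hq).2 ⟨add_comm _ _, hν' i⟩
  exact ⟨hdiv.symm.trans hdiv', hmod.symm.trans hmod'⟩

end Finsupp

namespace MvPolynomial

variable {σ R : Type*} [CommSemiring R]

noncomputable def frobeniusCoeff (q : ℕ) [NeZero q] (ν : σ →₀ ℕ) :
    MvPolynomial σ R →ₗ[R] MvPolynomial σ R where
  toFun h := AddMonoidAlgebra.ofCoeff <|
    (AddMonoidAlgebra.coeff h).comapDomain (fun m => q • m + ν)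
      (Finsupp.smul_add_injective q ν).injOn
  map_add' _ _ := by ext; simp [coeff]
  map_smul' _ _ := by ext; simp [coeff]

variable {q : ℕ}

lemma coeff_frobeniusCoeff [NeZero q] (ν m : σ →₀ ℕ) (h : MvPolynomial σ R) :
    coeff m (frobeniusCoeff q ν h) = coeff (q • m + ν) h := by
  simp [frobeniusCoeff, coeff]

lemma frobeniusCoeff_monomial_smul_add [NeZero q] {ν : σ →₀ ℕ} (d : σ →₀ ℕ) (c : R) :
    frobeniusCoeff q ν (monomial (q • d + ν) c) = monomial d c := by
  classical
  ext m
  simp only [coeff_frobeniusCoeff, coeff_monomial, (Finsupp.smul_add_injective q ν).eq_iff]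

lemma frobeniusCoeff_monomial_of_ne [NeZero q] {ν ν₀ : σ →₀ ℕ} (hν : ∀ i, ν i < q)
    (hν₀ : ∀ i, ν₀ i < q) (hne : ν₀ ≠ ν) (d : σ →₀ ℕ) (c : R) :
    frobeniusCoeff q ν (monomial (q • d + ν₀) c) = 0 := by
  classical
  ext m
  simp only [coeff_frobeniusCoeff, coeff_monomial, Finsupp.smul_add_eq_smul_add_iff hν₀ hν,
    coeff_zero, hne, and_false, if_false]

lemma frobeniusCoeff_expand_mul [NeZero q] {ν : σ →₀ ℕ} (hν : ∀ i, ν i < q)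
    (r s : MvPolynomial σ R) :
    frobeniusCoeff q ν (expand q r * s) = r * frobeniusCoeff q ν s := by
  induction r using induction_on' with
  | add r₁ r₂ h₁ h₂ => simp only [map_add, add_mul, h₁, h₂]
  | monomial u a =>
    induction s using induction_on' with
    | add s₁ s₂ h₁ h₂ => simp only [mul_add, map_add, h₁, h₂]
    | monomial v b =>
      obtain ⟨w, ν₀, hν₀, rfl⟩ := Finsupp.exists_smul_add_eq (q := q) v
      rw [expand_monomial, monomial_mul, ← add_assoc, ← smul_add]
      obtain rfl | hne := eq_or_ne ν₀ ν
      · rw [frobeniusCoeff_monomial_smul_add, frobeniusCoeff_monomial_smul_add, monomial_mul]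
      · rw [frobeniusCoeff_monomial_of_ne hν hν₀ hne, frobeniusCoeff_monomial_of_ne hν hν₀ hne,
          mul_zero]

noncomputable def residues (σ : Type*) [Fintype σ] (q : ℕ) : Finset (σ →₀ ℕ) :=
  Finset.univ.finsupp fun _ => Finset.range q

lemma mem_residues [Fintype σ] {ν : σ →₀ ℕ} : ν ∈ residues σ q ↔ ∀ i, ν i < q := by
  simp [residues, Finset.mem_finsupp_iff]

theorem sum_expand_frobeniusCoeff_mul_monomial [Fintype σ] [NeZero q] (h : MvPolynomial σ R) :
    ∑ ν ∈ residues σ q, expand q (frobeniusCoeff q ν h) * monomial ν 1 = h := by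
  induction h using induction_on' with
  | add h₁ h₂ ih₁ ih₂ => simp only [map_add, add_mul, Finset.sum_add_distrib, ih₁, ih₂]
  | monomial d c =>
    obtain ⟨m, ν₀, hν₀, rfl⟩ := Finsupp.exists_smul_add_eq (q := q) d
    rw [Finset.sum_eq_single_of_mem ν₀ (mem_residues.2 hν₀) fun ν hν hne => by
      rw [frobeniusCoeff_monomial_of_ne (mem_residues.1 hν) hν₀ hne.symm, map_zero, zero_mul]]
    rw [frobeniusCoeff_monomial_smul_add, expand_monomial, monomial_mul, mul_one]

lemma expand_pow_zmod {p : ℕ} [Fact p.Prime] (e : ℕ) (f : MvPolynomial σ (ZMod p)) :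
    expand (p ^ e) f = f ^ p ^ e := by
  induction e with
  | zero => simp
  | succ e ih => rw [pow_succ, expand_mul, expand_zmod, map_pow, ih, pow_mul]

end MvPolynomial

open MvPolynomial

lemma pow_mem_frobeniusPower {R : Type*} [CommRing R] {J : Ideal R} {g : R} (q : ℕ)
    (hg : g ∈ J) : g ^ q ∈ frobeniusPower J q :=
  Ideal.subset_span ⟨g, hg, rfl⟩

lemma map_mem_of_mem_frobeniusPower {R : Type*} [CommRing R] {q : ℕ} {ψ : R →+ R}
    (hψ : ∀ r s, ψ (r ^ q * s) = r * ψ s) {J : Ideal R} {x : R}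
    (hx : x ∈ frobeniusPower J q) : ψ x ∈ J := by
  -- `ψ` is not `R`-linear, so the span induction has to carry an arbitrary multiplier `a`.
  suffices ∀ a, ψ (a * x) ∈ J by simpa using this 1
  induction hx using Submodule.span_induction with
  | mem _ hg =>
    obtain ⟨g, hg, rfl⟩ := hg
    intro a
    rw [mul_comm, hψ]
    exact J.mul_mem_right _ hg
  | zero => simp
  | add x y _ _ hx hy =>
    intro a
    rw [mul_add, map_add]
    exact J.add_mem (hx a) (hy a)
  | smul b x _ hx =>
    intro a
    rw [smul_eq_mul, ← mul_assoc]
    exact hx _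

lemma isFrobeniusLinear_frobeniusCoeff {p n e : ℕ} [Fact p.Prime] {ν : Fin n →₀ ℕ}
    (hν : ∀ i, ν i < p ^ e) : IsFrobeniusLinear p n e (frobeniusCoeff (p ^ e) ν) :=
  ⟨map_add _, fun r s => by rw [← expand_pow_zmod, frobeniusCoeff_expand_mul hν]⟩

lemma mem_frobeniusPower_testIdeal {p n : ℕ} [Fact p.Prime] (f : MvPolynomial (Fin n) (ZMod p))
    (a e : ℕ) : f ^ a ∈ frobeniusPower (testIdeal p n f a e) (p ^ e) := by
  rw [← sum_expand_frobeniusCoeff_mul_monomial (q := p ^ e) (f ^ a)]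
  refine Ideal.sum_mem _ fun ν hν => Ideal.mul_mem_right _ _ ?_
  rw [expand_pow_zmod]
  exact pow_mem_frobeniusPower _ <| Ideal.subset_span
    ⟨_, isFrobeniusLinear_frobeniusCoeff (mem_residues.1 hν), rfl⟩

lemma testIdeal_le_of_mem_frobeniusPower {p n : ℕ} {f : MvPolynomial (Fin n) (ZMod p)} {a e : ℕ}
    {J : Ideal (MvPolynomial (Fin n) (ZMod p))} (hJ : f ^ a ∈ frobeniusPower J (p ^ e)) :
    testIdeal p n f a e ≤ J := by
  refine Ideal.span_le.2 ?_
  rintro _ ⟨ψ, ⟨hadd, hψ⟩, rfl⟩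
  exact map_mem_of_mem_frobeniusPower (ψ := AddMonoidHom.mk' ψ hadd) hψ hJ

theorem testIdeal_smallest (p n : ℕ) (hp : p.Prime)
    (f : MvPolynomial (Fin n) (ZMod p)) (a e : ℕ) :
    f ^ a ∈ frobeniusPower (testIdeal p n f a e) (p ^ e) ∧
    ∀ J : Ideal (MvPolynomial (Fin n) (ZMod p)),
      f ^ a ∈ frobeniusPower J (p ^ e) → testIdeal p n f a e ≤ J :=
  haveI := Fact.mk hp
  ⟨mem_frobeniusPower_testIdeal f a e, fun _ => testIdeal_le_of_mem_frobeniusPower⟩
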